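/- If p and q are distinct odd primes, then T(pq) = 4(p + q) - 6pq - 3. -/

import Mathlib

/-!
For odd `k`, the involution `j ↦ 2k - j` pairs off the terms of `T(h,k)` with `k ∤ hj` with
opposite signs. The surviving `j` are the multiples of `k / gcd(h,k)`, and since
`(-1)^(hj/k) = (-1)^(hj)` for odd `k` they contribute `1` if `h` is even and `1 - 2 gcd(h,k)`
if `h` is odd. Summing over `h`, `T(k) = 2k - 1 - 2 P(k)` with Pillai's function
`P(k) = ∑_{m<k} gcd(m,k)`. As `P = id ∗ φ` is multiplicative and `P(p) = 2p - 1`,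
`T(pq) = 2pq - 1 - 2(2p - 1)(2q - 1)`.
-/

/-- `T(h,k) := ∑_{j=1}^{2k-1} (-1)^{j+1+⌊hj/k⌋}`. -/
def Tpair (h k : ℕ) : ℤ := ∑ j ∈ Finset.Icc 1 (2 * k - 1), (-1 : ℤ) ^ (j + 1 + h * j / k)

/-- `T(k) := ∑_{h=1}^{2k-1} T(h,k)`. -/
def Tsum (k : ℕ) : ℤ := ∑ h ∈ Finset.Icc 1 (2 * k - 1), Tpair h k

open Finset

section Parity

variable {a b k n : ℕ}

lemma neg_one_pow_add_neg_one_pow_of_odd_add (hab : Odd (a + b)) :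
    (-1 : ℤ) ^ a + (-1) ^ b = 0 := by
  rcases Nat.even_or_odd a with ha | ha
  · rw [ha.neg_one_pow, (Nat.odd_add'.mp hab |>.mpr ha).neg_one_pow]; norm_num
  · rw [ha.neg_one_pow, (Nat.odd_add.mp hab |>.mp ha).neg_one_pow]; norm_num

lemma neg_one_pow_mul_of_odd (hk : Odd k) (n : ℕ) : (-1 : ℤ) ^ (k * n) = (-1) ^ n := by
  rw [pow_mul, hk.neg_one_pow]

lemma neg_one_pow_div_of_odd (hk : Odd k) (hn : k ∣ n) : (-1 : ℤ) ^ (n / k) = (-1) ^ n := by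
  conv_rhs => rw [← Nat.mul_div_cancel' hn, neg_one_pow_mul_of_odd hk]

lemma sum_range_neg_one_pow_succ_mul_add_one (h : ℕ) (hn : Odd n) :
    ∑ t ∈ range n, (-1 : ℤ) ^ ((t + 1) * (h + 1) + 1) = if Even h then 1 else -(n : ℤ) := by
  split_ifs with hh
  · obtain ⟨m, rfl⟩ := hh
    have hterm : ∀ t, (-1 : ℤ) ^ ((t + 1) * (m + m + 1) + 1) = (-1) ^ t := fun t => by
      rw [show (t + 1) * (m + m + 1) + 1 = 2 * ((t + 1) * m + 1) + t by ring, pow_add, pow_mul]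
      norm_num
    simp_rw [hterm]
    rw [neg_one_geom_sum, if_neg (Nat.not_even_iff_odd.mpr hn)]
  · obtain ⟨m, rfl⟩ := Nat.not_even_iff_odd.mp hh
    have hterm : ∀ t, (-1 : ℤ) ^ ((t + 1) * (2 * m + 1 + 1) + 1) = -1 := fun t =>
      Odd.neg_one_pow ⟨(t + 1) * (m + 1), by ring⟩
    simp [hterm]

end Parity

namespace Nat

variable {h j k : ℕ}

lemma mul_sub_div_add_mul_div_of_not_dvd (hk : 0 < k) (hj : j ≤ 2 * k) (hkj : ¬k ∣ h * j) :
    h * (2 * k - j) / k + h * j / k + 1 = 2 * h := by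
  have hr : 0 < h * j % k := pos_of_ne_zero fun h0 => hkj (dvd_of_mod_eq_zero h0)
  have hrk := mod_lt (h * j) hk
  have hdiv := div_add_mod (h * j) k
  have hsum : h * (2 * k - j) + h * j = k * (2 * h) := by
    rw [← Nat.mul_add, Nat.sub_add_cancel hj]; ring
  have hq : h * j / k < 2 * h := by
    by_contra! hq
    have := Nat.mul_le_mul_left k hq
    omega
  obtain ⟨m, hm⟩ := Nat.exists_eq_add_of_lt hq
  have hkm : k * (2 * h) = k * (h * j / k) + k * m + k := by rw [hm]; ring
  have hrefl : h * (2 * k - j) = k * m + (k - h * j % k) := by omega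
  rw [hrefl, mul_add_div hk, div_eq_of_lt (by omega)]
  omega

lemma dvd_mul_iff_div_gcd_dvd (hk : 0 < k) : k ∣ h * j ↔ k / h.gcd k ∣ j := by
  have hd : 0 < h.gcd k := gcd_pos_of_pos_right h hk
  obtain ⟨h', k', hcop, hh, hk'⟩ := exists_coprime h k
  set d := h.gcd k
  clear_value d
  subst hh hk'
  rw [Nat.mul_div_cancel _ hd, mul_right_comm, Nat.mul_dvd_mul_iff_right hd,
    hcop.symm.dvd_mul_left]

end Nat

section Tpair

variable {h k : ℕ}

lemma sum_neg_one_pow_filter_not_dvd_eq_zero (hk : 0 < k) :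
    ∑ j ∈ Icc 1 (2 * k - 1) with ¬k ∣ h * j, (-1 : ℤ) ^ (j + 1 + h * j / k) = 0 := by
  refine sum_involution (fun j _ => 2 * k - j) (fun j hj => ?_) (fun j hj _ => ?_)
    (fun j hj => ?_) (fun j hj => ?_) <;> simp only [mem_filter, mem_Icc] at hj ⊢
  · apply neg_one_pow_add_neg_one_pow_of_odd_add
    have := Nat.mul_sub_div_add_mul_div_of_not_dvd hk (by omega) hj.2
    exact ⟨k + h, by omega⟩
  · intro hjk
    exact hj.2 (by rw [show j = k by omega]; exact dvd_mul_left k h)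
  · refine ⟨by omega, fun hdvd => hj.2 ((Nat.dvd_add_right hdvd).mp ?_)⟩
    rw [← Nat.mul_add, Nat.sub_add_cancel (by omega)]
    exact ⟨2 * h, by ring⟩
  · omega

lemma sum_neg_one_pow_filter_dvd_eq (hk : Odd k) :
    ∑ j ∈ Icc 1 (2 * k - 1) with k ∣ h * j, (-1 : ℤ) ^ (j + 1 + h * j / k)
      = ∑ t ∈ range (2 * h.gcd k - 1), (-1 : ℤ) ^ ((t + 1) * (h + 1) + 1) := by
  set d := h.gcd k
  set k' := k / d
  have hkd : k' * d = k := Nat.div_mul_cancel (Nat.gcd_dvd_right h k)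
  have hk' : Odd k' := Nat.Odd.of_mul_left (hkd ▸ hk)
  have hk'0 : 0 < k' := hk'.pos
  have hdvd_iff : ∀ j, k ∣ h * j ↔ k' ∣ j := fun j => Nat.dvd_mul_iff_div_gcd_dvd hk.pos
  have h2k : k' * (2 * d) = 2 * k := by rw [← hkd]; ring
  clear_value k' d
  symm
  apply sum_nbij' (fun t => k' * (t + 1)) (fun j => j / k' - 1)
  · intro t ht
    simp only [mem_range, mem_filter, mem_Icc, hdvd_iff] at ht ⊢
    have := Nat.mul_le_mul_left k' (show t + 2 ≤ 2 * d by omega)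
    have : 0 < k' * (t + 1) := by positivity
    have : k' * (t + 2) = k' * (t + 1) + k' := by ring
    exact ⟨⟨by omega, by omega⟩, dvd_mul_right _ _⟩
  · intro j hj
    simp only [mem_range, mem_filter, mem_Icc, hdvd_iff] at hj ⊢
    obtain ⟨⟨hj1, hj2⟩, c, rfl⟩ := hj
    rw [Nat.mul_div_cancel_left _ hk'0]
    have := Nat.lt_of_mul_lt_mul_left (show k' * c < k' * (2 * d) by omega)
    have : c ≠ 0 := by rintro rfl; simp at hj1
    omega
  · intro t _
    rw [Nat.mul_div_cancel_left _ hk'0, Nat.add_sub_cancel]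
  · intro j hj
    simp only [mem_filter, mem_Icc, hdvd_iff] at hj
    obtain ⟨⟨hj1, _⟩, c, rfl⟩ := hj
    have : c ≠ 0 := by rintro rfl; simp at hj1
    rw [Nat.mul_div_cancel_left _ hk'0, Nat.sub_add_cancel (by omega)]
  · intro t _
    have hdvd : k ∣ h * (k' * (t + 1)) := (hdvd_iff _).mpr (dvd_mul_right _ _)
    rw [pow_add _ _ (h * _ / k), neg_one_pow_div_of_odd hk hdvd, ← pow_add,
      show k' * (t + 1) + 1 + h * (k' * (t + 1)) = k' * ((t + 1) * (h + 1)) + 1 by ring,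
      pow_succ _ (k' * _), neg_one_pow_mul_of_odd hk', pow_succ]

theorem Tpair_of_odd (hk : Odd k) :
    Tpair h k = if Even h then 1 else 1 - 2 * (h.gcd k : ℤ) := by
  have hd : 0 < h.gcd k := Nat.gcd_pos_of_pos_right h hk.pos
  rw [Tpair, ← sum_filter_add_sum_filter_not _ (fun j => k ∣ h * j),
    sum_neg_one_pow_filter_not_dvd_eq_zero hk.pos, add_zero, sum_neg_one_pow_filter_dvd_eq hk,
    sum_range_neg_one_pow_succ_mul_add_one h ⟨h.gcd k - 1, by omega⟩]
  push_cast [Nat.cast_sub (by omega : 1 ≤ 2 * h.gcd k)]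
  ring_nf

end Tpair

section Tsum

variable {k : ℕ}

lemma sum_filter_odd_gcd_eq_sum_range_gcd (hk : Odd k) :
    ∑ h ∈ Icc 1 (2 * k - 1) with Odd h, h.gcd k = ∑ m ∈ range k, m.gcd k := by
  have hk2 := Nat.odd_iff.mp hk
  apply sum_nbij' (fun h => if h < k then h else h - k) (fun m => if Odd m then m else m + k)
  · intro h hh
    simp only [mem_filter, mem_Icc, mem_range, Nat.odd_iff] at hh ⊢
    split_ifs <;> omega
  · intro m hm
    simp only [mem_filter, mem_Icc, mem_range, Nat.odd_iff] at hm ⊢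
    split_ifs <;> omega
  · intro h hh
    simp only [mem_filter, mem_Icc, Nat.odd_iff] at hh ⊢
    split_ifs <;> omega
  · intro m hm
    simp only [mem_range, Nat.odd_iff] at hm ⊢
    split_ifs <;> omega
  · intro h _
    split_ifs with hhk
    · rfl
    · rw [Nat.gcd_sub_self_left (by omega)]

theorem Tsum_of_odd (hk : Odd k) :
    Tsum k = 2 * k - 1 - 2 * ((∑ m ∈ range k, m.gcd k : ℕ) : ℤ) := by
  have hterm : ∀ h : ℕ, (if Even h then 1 else 1 - 2 * (h.gcd k : ℤ))
      = 1 - 2 * (if Odd h then (h.gcd k : ℤ) else 0) := fun h => by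
    rcases Nat.even_or_odd h with hh | hh
    · simp [hh, Nat.not_odd_iff_even.mpr hh]
    · simp [hh, Nat.not_even_iff_odd.mpr hh]
  rw [Tsum, sum_congr rfl fun h _ => Tpair_of_odd hk, ← sum_filter_odd_gcd_eq_sum_range_gcd hk]
  simp only [hterm, sum_sub_distrib, ← mul_sum, ← sum_filter, sum_const, Nat.card_Icc,
    Nat.add_sub_cancel, nsmul_eq_mul, mul_one]
  push_cast [Nat.cast_sub (by have := hk.pos; omega : 1 ≤ 2 * k)]
  ring

end Tsum

namespace ArithmeticFunction

def totient : ArithmeticFunction ℕ := ⟨Nat.totient, Nat.totient_zero⟩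

theorem totient_apply (n : ℕ) : totient n = n.totient := rfl

theorem isMultiplicative_totient : IsMultiplicative totient :=
  ⟨Nat.totient_one, fun h => Nat.totient_mul h⟩

theorem id_mul_totient_apply (n : ℕ) :
    (ArithmeticFunction.id * totient) n = ∑ m ∈ range n, m.gcd n := by
  rw [mul_apply, Nat.sum_divisorsAntidiagonal fun a b => ArithmeticFunction.id a * totient b]
  rcases n.eq_zero_or_pos with rfl | hn
  · simp
  rw [← sum_fiberwise_of_maps_to (s := range n) (g := n.gcd)
    fun m _ => Nat.mem_divisors.mpr ⟨Nat.gcd_dvd_left n m, hn.ne'⟩]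
  refine sum_congr rfl fun d hd => ?_
  rw [id_apply, totient_apply, Nat.totient_div_of_dvd (Nat.dvd_of_mem_divisors hd), mul_comm,
    ← smul_eq_mul, ← sum_const]
  exact sum_congr rfl fun m hm => by rw [Nat.gcd_comm, (mem_filter.mp hm).2]

end ArithmeticFunction

open ArithmeticFunction in
lemma sum_range_gcd_mul {m n : ℕ} (hmn : m.Coprime n) :
    ∑ x ∈ range (m * n), x.gcd (m * n) = (∑ x ∈ range m, x.gcd m) * ∑ x ∈ range n, x.gcd n := by
  simp only [← id_mul_totient_apply]
  exact (isMultiplicative_id.mul isMultiplicative_totient).map_mul_of_coprime hmn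

open ArithmeticFunction in
lemma sum_range_gcd_prime {p : ℕ} (hp : p.Prime) : ∑ m ∈ range p, m.gcd p = 2 * p - 1 := by
  rw [← id_mul_totient_apply, mul_apply,
    Nat.sum_divisorsAntidiagonal fun a b => ArithmeticFunction.id a * totient b, hp.sum_divisors]
  simp only [id_apply, totient_apply, Nat.totient_prime hp, Nat.div_self hp.pos, Nat.div_one,
    Nat.totient_one]
  have := hp.pos
  omega

theorem stmt_16 (p q : ℕ) (hp : p.Prime) (hq : q.Prime) (hpo : Odd p) (hqo : Odd q)
    (hne : p ≠ q) :
    Tsum (p * q) = 4 * ((p : ℤ) + q) - 6 * (p : ℤ) * q - 3 := by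
  rw [Tsum_of_odd (hpo.mul hqo), sum_range_gcd_mul ((Nat.coprime_primes hp hq).mpr hne),
    sum_range_gcd_prime hp, sum_range_gcd_prime hq]
  push_cast [Nat.cast_sub (by have := hp.pos; omega : 1 ≤ 2 * p),
    Nat.cast_sub (by have := hq.pos; omega : 1 ≤ 2 * q)]
  ring
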